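/- arXiv:math/0310318 — 6 statements merged into one kernel-verified Lean document; each statement's English description precedes it below -/
import Mathlib

section
/- Let g be a Banach Lie algebra, b₁ a Banach space, and ι : b₁ → b a continuous linear injection with closed range into a Banach Lie-Poisson space b whose dual is g = b*. If ker ι* is a closed ideal in g and G is a connected Banach Lie group with Lie algebra g, then for every b₁ ∈ b₁, the coadjoint orbit Ad*_G(ι(b₁)) is contained in ι(b₁'s image), i.e., Ad*_g ι(b₁) ∈ ι(b₁-space) for all g ∈ G. -/
/-!
Because the range of `ι` is the annihilator of `ker ι*`, an operator on `b` preserves it as soon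
as its dual preserves `ker ι*`. For `Ad g = exp (ad x)` this holds: `ker ι*` is a closed subspace
invariant under `ad x` (it is an ideal), hence under every partial sum of the exponential series
and so under their limit. The elements of `G` whose coadjoint action preserves the range of `ι`
form a submonoid containing a neighbourhood of `1`, and in a connected group such a submonoid is
the whole group.
-/

open NormedSpace Set

namespace Submodule

variable {𝕜 V : Type*} [RCLike 𝕜] [NormedAddCommGroup V] [NormedSpace 𝕜 V]

def invariantOperators (K : Submodule 𝕜 V) : Subalgebra 𝕜 (V →L[𝕜] V) where
  carrier := {T | MapsTo T K K}
  mul_mem' hS hT := hS.comp hT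
  add_mem' hS hT _ hv := K.add_mem (hS hv) (hT hv)
  algebraMap_mem' c _ hv := K.smul_mem c hv

theorem mem_invariantOperators {K : Submodule 𝕜 V} {T : V →L[𝕜] V} :
    T ∈ K.invariantOperators ↔ MapsTo T K K := Iff.rfl

theorem isClosed_invariantOperators {K : Submodule 𝕜 V} (hK : IsClosed (K : Set V)) :
    IsClosed (K.invariantOperators : Set (V →L[𝕜] V)) := by
  have hinter : (K.invariantOperators : Set (V →L[𝕜] V)) =
      ⋂ v ∈ K, (fun T : V →L[𝕜] V => T v) ⁻¹' K := by
    ext T; simp [mem_invariantOperators, MapsTo]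
  rw [hinter]
  exact isClosed_biInter fun v _ => hK.preimage (ContinuousLinearMap.apply 𝕜 V v).continuous

theorem mapsTo_exp {K : Submodule 𝕜 V} (hK : IsClosed (K : Set V)) {A : V →L[𝕜] V}
    (hA : MapsTo A K K) : MapsTo (exp A : V →L[𝕜] V) K K := by
  rw [exp_eq_tsum 𝕜]
  exact tsum_mem (isClosed_invariantOperators hK) fun n =>
    Subalgebra.smul_mem _ (pow_mem (mem_invariantOperators.2 hA) n) _

end Submodule

namespace Submonoid

variable {G : Type*} [Group G] [TopologicalSpace G] [IsTopologicalGroup G] [ConnectedSpace G]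

theorem eq_top_of_mem_nhds_one (M : Submonoid G) (hM : (M : Set G) ∈ nhds (1 : G)) : M = ⊤ := by
  let H : Subgroup G :=
    { carrier := {g | g ∈ M ∧ g⁻¹ ∈ M}
      mul_mem' := fun ⟨ha, ha'⟩ ⟨hb, hb'⟩ => ⟨M.mul_mem ha hb, by simpa using M.mul_mem hb' ha'⟩
      one_mem' := by simp [M.one_mem]
      inv_mem' := fun ⟨ha, ha'⟩ => ⟨ha', by simpa using ha⟩ }
  have hH : (H : Set G) ∈ nhds (1 : G) := Filter.inter_mem hM (inv_mem_nhds_one G hM)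
  have hHopen : IsOpen (H : Set G) := H.isOpen_of_mem_nhds hH
  have hHuniv : (H : Set G) = univ :=
    IsClopen.eq_univ ⟨H.isClosed_of_isOpen hHopen, hHopen⟩ ⟨1, H.one_mem⟩
  exact eq_top_iff.2 fun g _ => (hHuniv.symm ▸ mem_univ g : g ∈ (H : Set G)).1

end Submonoid

namespace ContinuousLinearMap

variable {𝕜 E B : Type*} [RCLike 𝕜] [NormedAddCommGroup E] [NormedSpace 𝕜 E]
  [NormedAddCommGroup B] [NormedSpace 𝕜 B]

noncomputable def kerDual (ι : B →L[𝕜] E) : Submodule 𝕜 (StrongDual 𝕜 E) :=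
  ((compL 𝕜 B E 𝕜).flip ι : StrongDual 𝕜 E →ₗ[𝕜] StrongDual 𝕜 B).ker

theorem mem_kerDual {ι : B →L[𝕜] E} {x : StrongDual 𝕜 E} : x ∈ ι.kerDual ↔ x.comp ι = 0 :=
  Iff.rfl

theorem isClosed_kerDual (ι : B →L[𝕜] E) : IsClosed (ι.kerDual : Set (StrongDual 𝕜 E)) :=
  ((compL 𝕜 B E 𝕜).flip ι).isClosed_ker

theorem mapsTo_range_of_dual_mapsTo_kerDual {ι : B →L[𝕜] E}
    (hann : ∀ b : E, (∀ x : StrongDual 𝕜 E, x.comp ι = 0 → x b = 0) → b ∈ range ι)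
    {T : E →L[𝕜] E} {S : StrongDual 𝕜 E →L[𝕜] StrongDual 𝕜 E}
    (hTS : ∀ (x : StrongDual 𝕜 E) (b : E), x (T b) = S x b)
    (hS : MapsTo S ι.kerDual ι.kerDual) : MapsTo T (range ι) (range ι) := by
  rintro _ ⟨b₁, rfl⟩
  refine hann _ fun x hx => ?_
  rw [hTS]
  exact DFunLike.congr_fun (mem_kerDual.1 (hS (mem_kerDual.2 hx))) b₁

end ContinuousLinearMap

theorem stmt4_general
    {E B G : Type*}
    [NormedAddCommGroup E] [NormedSpace ℝ E]
    [NormedAddCommGroup B] [NormedSpace ℝ B]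
    [Group G] [TopologicalSpace G] [IsTopologicalGroup G] [ConnectedSpace G]
    (br : StrongDual ℝ E →L[ℝ] StrongDual ℝ E →L[ℝ] StrongDual ℝ E)
    (ι : B →L[ℝ] E)
    (hann : ∀ b : E, (∀ x : StrongDual ℝ E, x.comp ι = 0 → x b = 0) → b ∈ Set.range ι)
    (hideal : ∀ (x y : StrongDual ℝ E), y.comp ι = 0 → (br x y).comp ι = 0)
    (Ad : G →* (StrongDual ℝ E →L[ℝ] StrongDual ℝ E))
    (Adstar : G →* (E →L[ℝ] E))
    (hdual : ∀ (g : G) (x : StrongDual ℝ E) (b : E), x (Adstar g b) = (Ad g) x b)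
    (hexp : ∃ U ∈ nhds (1 : G), ∀ g ∈ U, ∃ x : StrongDual ℝ E,
      Ad g = @NormedSpace.exp _ _ _ (@NonUnitalSeminormedRing.toIsTopologicalRing (StrongDual ℝ E →L[ℝ] StrongDual ℝ E) _) (br x)) :
    ∀ (g : G) (b₁ : B), Adstar g (ι b₁) ∈ Set.range ι := by
  obtain ⟨U, hU, hUexp⟩ := hexp
  let M : Submonoid G :=
    (LinearMap.range (ι : B →ₗ[ℝ] E)).invariantOperators.toSubmonoid.comap Adstar
  have hUM : U ⊆ M := fun g hg => by
    obtain ⟨x, hx⟩ := hUexp g hg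
    have hAd : MapsTo (Ad g) ι.kerDual ι.kerDual := by
      rw [hx]
      exact Submodule.mapsTo_exp ι.isClosed_kerDual fun y hy => hideal x y hy
    show MapsTo (Adstar g) (LinearMap.range (ι : B →ₗ[ℝ] E)) (LinearMap.range (ι : B →ₗ[ℝ] E))
    rw [LinearMap.coe_range]
    exact ι.mapsTo_range_of_dual_mapsTo_kerDual hann (hdual g) hAd
  have hM : M = ⊤ := M.eq_top_of_mem_nhds_one (Filter.mem_of_superset hU hUM)
  intro g b₁
  have hg : g ∈ M := hM ▸ Submonoid.mem_top g
  exact hg (LinearMap.mem_range_self _ b₁)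

/-- Let `ι : B → E` be a continuous linear injection with closed range into a Banach
Lie–Poisson space `E` (with dual Banach Lie algebra bracket `br`), such that
`ker ι* = {x | x ∘ ι = 0}` is an ideal. If `G` is a connected (Banach Lie) group whose
adjoint action is locally given by exponentials `exp(ad_x)` and whose coadjoint action
`Adstar` on `E` is dual to `Ad`, then every coadjoint orbit through a point of the range
of `ι` stays in the range of `ι`. -/
theorem stmt4
    {E B G : Type*}
    [NormedAddCommGroup E] [NormedSpace ℝ E] [CompleteSpace E]
    [NormedAddCommGroup B] [NormedSpace ℝ B]
    [Group G] [TopologicalSpace G] [IsTopologicalGroup G] [ConnectedSpace G]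
    (br : StrongDual ℝ E →L[ℝ] StrongDual ℝ E →L[ℝ] StrongDual ℝ E)
    (ι : B →L[ℝ] E) (hinj : Function.Injective ι) (hcl : IsClosed (Set.range ι))
    (hann : ∀ b : E, (∀ x : StrongDual ℝ E, x.comp ι = 0 → x b = 0) → b ∈ Set.range ι)
    (hideal : ∀ (x y : StrongDual ℝ E), y.comp ι = 0 → (br x y).comp ι = 0)
    (Ad : G →* (StrongDual ℝ E →L[ℝ] StrongDual ℝ E))
    (Adstar : G →* (E →L[ℝ] E))
    (hdual : ∀ (g : G) (x : StrongDual ℝ E) (b : E), x (Adstar g b) = (Ad g) x b)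
    (hexp : ∃ U ∈ nhds (1 : G), ∀ g ∈ U, ∃ x : StrongDual ℝ E,
      Ad g = @NormedSpace.exp _ _ _ (@NonUnitalSeminormedRing.toIsTopologicalRing (StrongDual ℝ E →L[ℝ] StrongDual ℝ E) _) (br x)) :
    ∀ (g : G) (b₁ : B), Adstar g (ι b₁) ∈ Set.range ι :=
  stmt4_general br ι hann hideal Ad Adstar hdual hexp
end

section
/- Let b = b₁ ⊕ b₂ be a direct sum of closed subspaces of a Banach Lie-Poisson space with projectors R₁, R₂ (R₁+R₂ = id, R₁R₂ = R₂R₁ = 0). If im R₁* and im R₂* are Banach Lie subalgebras of b*, then the bracket {f,g}_R(b) := ⟨[R*Df(b), Dg(b)] + [Df(b), R*Dg(b)], b⟩ with R = (R₁ − R₂)/2 satisfies {f,g}_R(b₁+b₂) = ⟨[R₁*Df, R₁*Dg], b₁⟩ − ⟨[R₂*Df, R₂*Dg], b₂⟩, i.e., it is the product of the coinduced bracket on b₁ with the negative of the coinduced bracket on b₂. -/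
/-!
Split `x = x ∘ R₁ + x ∘ R₂` and `y = y ∘ R₁ + y ∘ R₂`. Bilinearity alone makes the mixed terms
of the `R`-bracket cancel, leaving `[x ∘ R₁, y ∘ R₁](b) - [x ∘ R₂, y ∘ R₂](b)`. Since the dual image
of `Rᵢ` is a subalgebra, `[x ∘ Rᵢ, y ∘ Rᵢ]` again factors through the idempotent `Rᵢ`, so it may
be evaluated at `Rᵢ b` instead of `b`.
-/

theorem LinearMap.map_half_sub_add_add_map_add_half_sub {𝕜 M N P : Type*} [Field 𝕜] [CharZero 𝕜]
    [AddCommGroup M] [Module 𝕜 M] [AddCommGroup N] [Module 𝕜 N] [AddCommGroup P] [Module 𝕜 P]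
    (B : M →ₗ[𝕜] N →ₗ[𝕜] P) (a a' : M) (c c' : N) :
    B ((1 / 2 : 𝕜) • (a - a')) (c + c') + B (a + a') ((1 / 2 : 𝕜) • (c - c'))
      = B a c - B a' c' := by
  simp only [map_add, map_sub, map_smul, LinearMap.add_apply, LinearMap.sub_apply,
    LinearMap.smul_apply]
  module

theorem ContinuousLinearMap.comp_apply_of_isIdempotentElem {R M N : Type*} [Semiring R]
    [TopologicalSpace M] [AddCommMonoid M] [Module R M] [TopologicalSpace N] [AddCommMonoid N]
    [Module R N] {P : M →L[R] M} (hP : IsIdempotentElem P) (z : M →L[R] N) (b : M) :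
    z.comp P (P b) = z.comp P b :=
  congrArg z (DFunLike.congr_fun hP.eq b)

theorem stmt6_general
    {E : Type*} [NormedAddCommGroup E] [NormedSpace ℝ E]
    (br : StrongDual ℝ E →ₗ[ℝ] StrongDual ℝ E →ₗ[ℝ] StrongDual ℝ E)
    (R₁ R₂ : E →L[ℝ] E)
    (hsum : R₁ + R₂ = ContinuousLinearMap.id ℝ E)
    (h12 : R₁.comp R₂ = 0)
    (hsub1 : ∀ x y : StrongDual ℝ E, ∃ z : StrongDual ℝ E, br (x.comp R₁) (y.comp R₁) = z.comp R₁)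
    (hsub2 : ∀ x y : StrongDual ℝ E, ∃ z : StrongDual ℝ E, br (x.comp R₂) (y.comp R₂) = z.comp R₂)
    (f g : E → ℝ) :
    ∀ b : E,
      br ((fderiv ℝ f b).comp ((1 / 2 : ℝ) • (R₁ - R₂))) (fderiv ℝ g b) b
        + br (fderiv ℝ f b) ((fderiv ℝ g b).comp ((1 / 2 : ℝ) • (R₁ - R₂))) b
      = br ((fderiv ℝ f b).comp R₁) ((fderiv ℝ g b).comp R₁) (R₁ b)
        - br ((fderiv ℝ f b).comp R₂) ((fderiv ℝ g b).comp R₂) (R₂ b) := by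
  intro b
  obtain ⟨hR₁, hR₂⟩ := IsIdempotentElem.of_mul_add h12 hsum
  have hsplit (x : StrongDual ℝ E) : x = x.comp R₁ + x.comp R₂ := by
    rw [← ContinuousLinearMap.comp_add, hsum, ContinuousLinearMap.comp_id]
  set x := fderiv ℝ f b
  set y := fderiv ℝ g b
  have hR := DFunLike.congr_fun (LinearMap.map_half_sub_add_add_map_add_half_sub br
    (x.comp R₁) (x.comp R₂) (y.comp R₁) (y.comp R₂)) b
  rw [← ContinuousLinearMap.comp_sub, ← ContinuousLinearMap.comp_sub,
    ← ContinuousLinearMap.comp_smul, ← ContinuousLinearMap.comp_smul, ← hsplit, ← hsplit,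
    add_apply, sub_apply] at hR
  obtain ⟨z₁, hz₁⟩ := hsub1 x y
  obtain ⟨z₂, hz₂⟩ := hsub2 x y
  rw [hR, hz₁, hz₂, ContinuousLinearMap.comp_apply_of_isIdempotentElem hR₁,
    ContinuousLinearMap.comp_apply_of_isIdempotentElem hR₂]

/-- For a splitting `E = im R₁ ⊕ im R₂` by complementary projectors whose dual images are
Lie subalgebras of the dual Lie algebra `(E*, br)`, the `R`-bracket with
`R = (R₁ - R₂)/2` is the difference of the two coinduced brackets:
`{f,g}_R(b) = ⟨[R₁*Df, R₁*Dg], R₁ b⟩ - ⟨[R₂*Df, R₂*Dg], R₂ b⟩`. -/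
theorem stmt6
    {E : Type*} [NormedAddCommGroup E] [NormedSpace ℝ E]
    (br : StrongDual ℝ E →ₗ[ℝ] StrongDual ℝ E →ₗ[ℝ] StrongDual ℝ E)
    (R₁ R₂ : E →L[ℝ] E)
    (hsum : R₁ + R₂ = ContinuousLinearMap.id ℝ E)
    (h12 : R₁.comp R₂ = 0) (h21 : R₂.comp R₁ = 0)
    (hsub1 : ∀ x y : StrongDual ℝ E, ∃ z : StrongDual ℝ E, br (x.comp R₁) (y.comp R₁) = z.comp R₁)
    (hsub2 : ∀ x y : StrongDual ℝ E, ∃ z : StrongDual ℝ E, br (x.comp R₂) (y.comp R₂) = z.comp R₂)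
    (f g : E → ℝ) (hf : Differentiable ℝ f) (hg : Differentiable ℝ g) :
    ∀ b : E,
      br ((fderiv ℝ f b).comp ((1 / 2 : ℝ) • (R₁ - R₂))) (fderiv ℝ g b) b
        + br (fderiv ℝ f b) ((fderiv ℝ g b).comp ((1 / 2 : ℝ) • (R₁ - R₂))) b
      = br ((fderiv ℝ f b).comp R₁) ((fderiv ℝ g b).comp R₁) (R₁ b)
        - br ((fderiv ℝ f b).comp R₂) ((fderiv ℝ g b).comp R₂) (R₂ b) :=
  stmt6_general br R₁ R₂ hsum h12 hsub1 hsub2 f g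
end

section
/- The projection π∞_{+,k} : L∞_+ → L∞_{+,k} that keeps the first k upper diagonals of an upper triangular bounded operator is an associative algebra homomorphism from (L∞_+, operator product) onto (L∞_{+,k}, ∘_k) whose kernel is the ideal I∞_{+,k} of operators supported on diagonals ≥ k; consequently, π∞_{+,k}([x,y]) = [π∞_{+,k}(x), π∞_{+,k}(y)]_k for all x, y ∈ L∞_+. -/
/-- The truncated product `∘_k` on `L∞_{+,k} ≅ (ℓ∞)^k`, written in diagonals. -/
noncomputable def kprod (k : ℕ) (x y : Fin k → ℕ → ℝ) : Fin k → ℕ → ℝ :=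
  fun l n => ∑ i ∈ (Finset.range (l.1 + 1)).attach,
    x ⟨i.1, lt_of_le_of_lt (Nat.lt_succ_iff.mp (Finset.mem_range.mp i.2)) l.2⟩ n *
    y ⟨l.1 - i.1, lt_of_le_of_lt (Nat.sub_le _ _) l.2⟩ (n + i.1)

/-- The commutator bracket `[x,y]_k = x ∘_k y - y ∘_k x`. -/
noncomputable def kbracket (k : ℕ) (x y : Fin k → ℕ → ℝ) : Fin k → ℕ → ℝ :=
  fun l n => kprod k x y l n - kprod k y x l n

/-- The product of upper triangular operators expressed in diagonals:
`(x·y)_l = ∑_{i=0}^l x_i · s^i(y_{l-i})`. -/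
noncomputable def fullProd (x y : ℕ → ℕ → ℝ) : ℕ → ℕ → ℝ :=
  fun l n => ∑ i ∈ Finset.range (l + 1), x i n * y (l - i) (n + i)

/-- The projection `π∞_{+,k}` keeping the first `k` upper diagonals. -/
def trunc (k : ℕ) (x : ℕ → ℕ → ℝ) : Fin k → ℕ → ℝ := fun l => x l.1

lemma trunc_prod (k : ℕ) (x y : ℕ → ℕ → ℝ) :
    trunc k (fullProd x y) = kprod k (trunc k x) (trunc k y) := by
  funext l n
  simp only [trunc, fullProd, kprod]
  exact (Finset.sum_attach _ _).symm

/-- `π∞_{+,k} : L∞_+ → (L∞_{+,k}, ∘_k)` is an algebra homomorphism, its kernel consists of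
operators whose first `k` diagonals vanish, and it intertwines commutators with the
truncated bracket `[·,·]_k`. -/
theorem stmt10 (k : ℕ) :
    (∀ x y : ℕ → ℕ → ℝ, trunc k (fullProd x y) = kprod k (trunc k x) (trunc k y)) ∧
    (∀ x : ℕ → ℕ → ℝ, trunc k x = (fun _ _ => 0) ↔ ∀ i < k, x i = fun _ => 0) ∧
    (∀ x y : ℕ → ℕ → ℝ,
      trunc k (fun l n => fullProd x y l n - fullProd y x l n)
        = kbracket k (trunc k x) (trunc k y)) := by
  refine ⟨trunc_prod k, ?_, ?_⟩
  · intro x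
    constructor
    · intro h i hi
      funext n
      have := congrFun (congrFun h ⟨i, hi⟩) n
      simpa [trunc] using this
    · intro h
      funext l n
      have := congrFun (h l.1 l.2) n
      simpa [trunc] using this
  · intro x y
    funext l n
    have h1 := congrFun (congrFun (trunc_prod k x y) l) n
    have h2 := congrFun (congrFun (trunc_prod k y x) l) n
    simp only [trunc] at h1 h2 ⊢
    simp [kbracket, ← h1, ← h2]
end

section
/- The group homomorphism π∞_{+,k} restricted to GL∞_+ (invertible upper triangular bounded operators) is surjective onto GL∞_{+,k}: for every g₀ + g₁S + ⋯ + g_{k−1}S^{k−1} ∈ GL∞_{+,k} (i.e., with g₀ invertible) there exists φ ∈ I∞_{+,k} such that g₀ + g₁S + ⋯ + g_{k−1}S^{k−1} + φ is invertible in L∞_+. -/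
/-!
Transport to `ℓ²` through the Hilbert basis and cut `ℕ` into blocks of length `k`. After
dividing row `n` by `g₀ n`, the prescribed band `a` has unit diagonal, and each of its entries
`(n, c)` with `n < c < n + k` either lies inside a block, where `n % k < c % k`, or crosses into
the next block, where `c % k < n % k`. Put the first kind into `N` (`withinBlock`) and find
`M` (`acrossBlock`), supported on the second kind, by a triangular solve so that
`(1 + M) (1 + N)` agrees with `a` on the band. Along `N` the residue mod `k` increases and along
`M` it decreases, so `N ^ k = M ^ k = 0` and both factors are invertible; multiplying by the
diagonal `g₀` gives the operator.
-/

open Finset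

noncomputable section

local notation "ℓ²" => lp (fun _ : ℕ => ℝ) 2

namespace UpperTriangularLift

section BandOperator

variable (a : ℕ → ℝ) (i : ℕ)

lemma sum_norm_rpow_weightedShift_le {C : ℝ} (hC : ∀ n, |a n| ≤ C) (f : ℓ²) (s : Finset ℕ) :
    ∑ n ∈ s, ‖a n * f (n + i)‖ ^ (2 : ENNReal).toReal ≤ (C * ‖f‖) ^ (2 : ENNReal).toReal := by
  have hC0 : 0 ≤ C := (abs_nonneg _).trans (hC 0)
  set t := (2 : ENNReal).toReal
  calc ∑ n ∈ s, ‖a n * f (n + i)‖ ^ t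
      ≤ ∑ n ∈ s, C ^ t * ‖f (n + i)‖ ^ t := by
        gcongr with n
        rw [norm_mul, Real.mul_rpow (norm_nonneg _) (norm_nonneg _)]
        gcongr
        exact hC n
    _ = C ^ t * ∑ m ∈ s.image (· + i), ‖f m‖ ^ t := by
        rw [sum_image fun _ _ _ _ h => add_left_injective i h, mul_sum]
    _ ≤ C ^ t * ‖f‖ ^ t := by
        gcongr
        exact lp.sum_rpow_le_norm_rpow (by norm_num) f _
    _ = (C * ‖f‖) ^ t := (Real.mul_rpow hC0 (norm_nonneg _)).symm

def weightedShift (ha : ∃ C, ∀ n, |a n| ≤ C) : ℓ² →L[ℝ] ℓ² :=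
  LinearMap.mkContinuousOfExistsBound
    { toFun f := ⟨fun n => a n * f (n + i),
        ha.elim fun _ hC => memℓp_gen' (sum_norm_rpow_weightedShift_le a i hC f)⟩
      map_add' f g := by ext n; exact mul_add _ _ _
      map_smul' c f := by ext n; simp [mul_left_comm] }
    (ha.elim fun C hC => ⟨C, fun f => lp.norm_le_of_forall_sum_le (by norm_num)
      (mul_nonneg ((abs_nonneg _).trans (hC 0)) (norm_nonneg f))
      (sum_norm_rpow_weightedShift_le a i hC f)⟩)

@[simp]
lemma weightedShift_apply (ha : ∃ C, ∀ n, |a n| ≤ C) (f : ℓ²) (n : ℕ) :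
    weightedShift a i ha f n = a n * f (n + i) := rfl

lemma isUnit_weightedShift_zero (ha : ∃ C, ∀ n, |a n| ≤ C) {ε : ℝ} (hε : 0 < ε)
    (haε : ∀ n, ε ≤ |a n|) : IsUnit (weightedShift a 0 ha) := by
  have ha0 n : a n ≠ 0 := abs_pos.mp (hε.trans_le (haε n))
  have hinv : ∃ C, ∀ n, |(a n)⁻¹| ≤ C :=
    ⟨ε⁻¹, fun n => by rw [abs_inv]; exact inv_anti₀ hε (haε n)⟩
  refine ⟨⟨_, weightedShift (fun n => (a n)⁻¹) 0 hinv, ?_, ?_⟩, rfl⟩ <;>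
    ext f n <;> simp [ha0]

variable (w : ℕ) (A : ℕ → ℕ → ℝ) (hA : ∃ C, ∀ n c, |A n c| ≤ C)

def bandOp : ℓ² →L[ℝ] ℓ² :=
  ∑ i ∈ range w, weightedShift (fun n => A n (n + i)) i (hA.imp fun _ h n => h n (n + i))

lemma bandOp_apply (f : ℓ²) (n : ℕ) :
    bandOp w A hA f n = ∑ i ∈ range w, A n (n + i) * f (n + i) := by
  simp only [bandOp, _root_.sum_apply, lp.coeFn_sum, Finset.sum_apply,
    weightedShift_apply]

lemma bandOp_single_apply (hband : ∀ n c, A n c ≠ 0 → n ≤ c ∧ c < n + w) (c n : ℕ) :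
    bandOp w A hA (lp.single 2 c 1) n = A n c := by
  rw [bandOp_apply]
  by_cases hnc : n ≤ c ∧ c < n + w
  · rw [sum_eq_single (c - n), Nat.add_sub_cancel' hnc.1, lp.single_apply_self, mul_one]
    · intro i _ hi
      rw [lp.single_apply_ne _ _ _ (by omega), mul_zero]
    · simp only [mem_range]
      omega
  · rw [sum_eq_zero, eq_comm]
    · exact not_imp_comm.mp (hband n c) hnc
    · intro i hi
      rw [lp.single_apply_ne _ _ _ (by simp only [mem_range] at hi; omega), mul_zero]

lemma bandOp_pow_eq_zero {m : ℕ} (φ : ℕ → ℕ) (hφ : ∀ n c, A n c ≠ 0 → φ c < φ n)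
    (hφm : ∀ n, φ n < m) : bandOp w A hA ^ m = 0 := by
  have key (t : ℕ) (f : ℓ²) (n : ℕ) (hn : φ n < t) : (bandOp w A hA ^ t) f n = 0 := by
    induction t generalizing n with
    | zero => omega
    | succ t ih =>
      rw [pow_succ', mul_apply_eq_comp, bandOp_apply]
      refine sum_eq_zero fun i _ => ?_
      by_cases hA0 : A n (n + i) = 0
      · rw [hA0, zero_mul]
      · rw [ih (n + i) (by have := hφ _ _ hA0; omega), mul_zero]
  ext f n
  exact key m f n (hφm n)

end BandOperator

section BlockArithmetic

variable {k n c s : ℕ}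

lemma lt_add_of_div_eq (hk : 0 < k) (hq : c / k = n / k) : c < n + k := by
  have := Nat.div_add_mod n k; have := Nat.div_add_mod c k; have := Nat.mod_lt c hk
  rw [hq] at *; omega

lemma mod_lt_mod_of_lt_of_div_eq (h : n < c) (hq : c / k = n / k) : n % k < c % k := by
  have := Nat.div_add_mod n k; have := Nat.div_add_mod c k
  rw [hq] at *; omega

lemma lt_and_lt_add_of_div_eq_succ (hk : 0 < k) (hq : c / k = n / k + 1)
    (hr : c % k < n % k) : n < k * (c / k) ∧ c < n + k := by
  have := Nat.div_add_mod n k; have := Nat.div_add_mod c k; have := Nat.mod_lt n hk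
  rw [hq, Nat.mul_succ] at *; omega

lemma div_eq_succ_of_lt_add (hk : 0 < k) (h : n ≤ c) (h' : c < n + k) (hq : c / k ≠ n / k) :
    c / k = n / k + 1 ∧ c % k < n % k := by
  have h1 : n / k ≤ c / k := Nat.div_le_div_right h
  have h2 : c / k ≤ n / k + 1 := by
    rw [← Nat.add_div_right n hk]; exact Nat.div_le_div_right h'.le
  have hq' : c / k = n / k + 1 := by omega
  refine ⟨hq', ?_⟩
  have := Nat.div_add_mod n k; have := Nat.div_add_mod c k
  rw [hq', Nat.mul_succ] at *; omega

lemma div_eq_of_mem_Icc (hk : 0 < k) (hs : s ∈ Icc (k * (c / k)) c) : s / k = c / k := by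
  have := Nat.div_add_mod c k; have := Nat.mod_lt c hk
  rw [mem_Icc] at hs
  exact Nat.div_eq_of_lt_le (by rw [mul_comm]; exact hs.1) (by rw [add_one_mul, mul_comm]; omega)

end BlockArithmetic

section UnipotentLift

variable (k : ℕ) (a : ℕ → ℕ → ℝ)

def withinBlock (n c : ℕ) : ℝ := if n < c ∧ c / k = n / k then a n c else 0

/-- Makes the `(n, c)` entry of `(1 + M) (1 + N)` equal to `a n c`; the sum is the part of
`(M N) n c` coming from the columns `s < c` of the block of `c`. -/
def acrossBlock (n c : ℕ) : ℝ :=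
  if c / k = n / k + 1 ∧ c % k < n % k then
    a n c - ∑ s ∈ (Ico (k * (c / k)) c).attach, acrossBlock n s * a s c
  else 0
termination_by c
decreasing_by exact (mem_Ico.mp s.2).2

lemma acrossBlock_eq (n c : ℕ) : acrossBlock k a n c =
    if c / k = n / k + 1 ∧ c % k < n % k then
      a n c - ∑ s ∈ Ico (k * (c / k)) c, acrossBlock k a n s * a s c
    else 0 := by
  rw [acrossBlock, sum_attach (Ico (k * (c / k)) c) fun s => acrossBlock k a n s * a s c]

variable {k a}

lemma lt_and_div_eq_of_withinBlock_ne_zero {n c : ℕ} (h : withinBlock k a n c ≠ 0) :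
    n < c ∧ c / k = n / k :=
  by_contra fun hnc => h (if_neg hnc)

lemma withinBlock_eq_zero_of_le {n c : ℕ} (h : c ≤ n) : withinBlock k a n c = 0 :=
  if_neg fun hnc => (hnc.1.trans_le h).false

lemma div_eq_succ_of_acrossBlock_ne_zero {n c : ℕ} (h : acrossBlock k a n c ≠ 0) :
    c / k = n / k + 1 ∧ c % k < n % k :=
  by_contra fun hnc => h (by rw [acrossBlock_eq, if_neg hnc])

lemma exists_bound_withinBlock (ha : ∃ C, ∀ n c, |a n c| ≤ C) :
    ∃ C, ∀ n c, |withinBlock k a n c| ≤ C := by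
  obtain ⟨C, hC⟩ := ha
  refine ⟨C, fun n c => ?_⟩
  unfold withinBlock
  split_ifs
  · exact hC n c
  · rw [abs_zero]
    exact (abs_nonneg _).trans (hC 0 0)

lemma exists_bound_acrossBlock (hk : 0 < k) (ha : ∃ C, ∀ n c, |a n c| ≤ C) :
    ∃ B, ∀ n c, |acrossBlock k a n c| ≤ B := by
  obtain ⟨C, hC⟩ := ha
  have hC0 : 0 ≤ C := (abs_nonneg _).trans (hC 0 0)
  suffices ∀ j, ∃ B, 0 ≤ B ∧ ∀ n c, c % k < j → |acrossBlock k a n c| ≤ B by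
    obtain ⟨B, -, hB⟩ := this k
    exact ⟨B, fun n c => hB n c (Nat.mod_lt c hk)⟩
  intro j
  induction j with
  | zero => exact ⟨0, le_rfl, fun _ _ h => absurd h (Nat.not_lt_zero _)⟩
  | succ j ih =>
    obtain ⟨B, hB0, hB⟩ := ih
    refine ⟨C + k * (B * C), by positivity, fun n c hc => ?_⟩
    rw [acrossBlock_eq]
    split_ifs
    · have hcard : #(Ico (k * (c / k)) c) ≤ k := by
        have := Nat.div_add_mod c k; have := Nat.mod_lt c hk
        rw [Nat.card_Ico]; omega
      calc |a n c - ∑ s ∈ Ico (k * (c / k)) c, acrossBlock k a n s * a s c|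
          ≤ |a n c| + ∑ s ∈ Ico (k * (c / k)) c, |acrossBlock k a n s * a s c| :=
            (abs_sub _ _).trans (add_le_add le_rfl (abs_sum_le_sum_abs _ _))
        _ ≤ C + ∑ s ∈ Ico (k * (c / k)) c, B * C := by
            gcongr with s hs
            · exact hC n c
            · have hsc : s % k < c % k := mod_lt_mod_of_lt_of_div_eq (mem_Ico.mp hs).2
                (div_eq_of_mem_Icc hk (Ico_subset_Icc_self hs)).symm
              rw [abs_mul]
              exact mul_le_mul (hB n s (by omega)) (hC s c) (abs_nonneg _) hB0
        _ ≤ C + k * (B * C) := by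
            rw [sum_const, nsmul_eq_mul]
            gcongr
    · rw [abs_zero]
      positivity

lemma one_add_withinBlock_single_apply (hk : 0 < k) (ha : ∃ C, ∀ n c, |a n c| ≤ C) (c s : ℕ) :
    (1 + bandOp k (withinBlock k a) (exists_bound_withinBlock ha)) (lp.single 2 c 1) s =
      if s = c then 1 else withinBlock k a s c := by
  have hband n c (h : withinBlock k a n c ≠ 0) : n ≤ c ∧ c < n + k :=
    have hnc := lt_and_div_eq_of_withinBlock_ne_zero h
    ⟨hnc.1.le, lt_add_of_div_eq hk hnc.2⟩
  rw [_root_.add_apply, lp.coeFn_add, Pi.add_apply, bandOp_single_apply _ _ _ hband]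
  split_ifs with hsc
  · simp [hsc, withinBlock]
  · simp [hsc]

variable (hk : 0 < k) (ha : ∃ C, ∀ n c, |a n c| ≤ C)

def unipotentLift : ℓ² →L[ℝ] ℓ² :=
  (1 + bandOp k (acrossBlock k a) (exists_bound_acrossBlock hk ha)) *
    (1 + bandOp k (withinBlock k a) (exists_bound_withinBlock ha))

lemma isUnit_unipotentLift : IsUnit (unipotentLift hk ha) := by
  refine (IsNilpotent.isUnit_one_add ⟨k, ?_⟩).mul (IsNilpotent.isUnit_one_add ⟨k, ?_⟩)
  · exact bandOp_pow_eq_zero _ _ _ (· % k)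
      (fun n c h => (div_eq_succ_of_acrossBlock_ne_zero h).2) (fun n => Nat.mod_lt n hk)
  · refine bandOp_pow_eq_zero _ _ _ (fun n => k - 1 - n % k) (fun n c h => ?_) (by omega)
    have hnc := lt_and_div_eq_of_withinBlock_ne_zero h
    have := mod_lt_mod_of_lt_of_div_eq hnc.1 hnc.2; have := Nat.mod_lt c hk
    omega

lemma unipotentLift_single_apply (c n : ℕ) :
    unipotentLift hk ha (lp.single 2 c 1) n = (if n = c then 1 else withinBlock k a n c) +
      ∑ i ∈ range k, acrossBlock k a n (n + i) *
        (if n + i = c then 1 else withinBlock k a (n + i) c) := by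
  rw [unipotentLift, mul_apply_eq_comp, _root_.add_apply, one_apply_eq_self, lp.coeFn_add,
    Pi.add_apply, bandOp_apply]
  simp only [one_add_withinBlock_single_apply hk ha]

lemma unipotentLift_single_apply_of_lt {c n : ℕ} (h : c < n) :
    unipotentLift hk ha (lp.single 2 c 1) n = 0 := by
  rw [unipotentLift_single_apply, if_neg h.ne', withinBlock_eq_zero_of_le h.le, zero_add]
  refine sum_eq_zero fun i _ => ?_
  rw [if_neg (by omega), withinBlock_eq_zero_of_le (by omega), mul_zero]

lemma unipotentLift_single_apply_of_div_eq (hdiag : ∀ n, a n n = 1) {c n : ℕ} (h : n ≤ c)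
    (hq : c / k = n / k) : unipotentLift hk ha (lp.single 2 c 1) n = a n c := by
  rw [unipotentLift_single_apply, sum_eq_zero, add_zero]
  · rcases h.eq_or_lt with rfl | hlt
    · rw [if_pos rfl, hdiag]
    · rw [if_neg hlt.ne, withinBlock, if_pos ⟨hlt, hq⟩]
  · intro i _
    by_cases hM : acrossBlock k a n (n + i) = 0
    · rw [hM, zero_mul]
    have hci : c < n + i := by
      by_contra! hic
      have := Nat.div_le_div_right (c := k) hic
      have := (div_eq_succ_of_acrossBlock_ne_zero hM).1
      omega
    rw [if_neg hci.ne', withinBlock_eq_zero_of_le hci.le, mul_zero]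

lemma unipotentLift_single_apply_of_div_eq_succ {c n : ℕ} (hq : c / k = n / k + 1)
    (hr : c % k < n % k) : unipotentLift hk ha (lp.single 2 c 1) n = a n c := by
  obtain ⟨hnb, hcn⟩ := lt_and_lt_add_of_div_eq_succ hk hq hr
  have hbc : k * (c / k) ≤ c := Nat.mul_div_le c k
  set F : ℕ → ℝ := fun s => acrossBlock k a n s * if s = c then 1 else withinBlock k a s c
  have hsum : ∑ i ∈ range k, F (n + i) = ∑ s ∈ Ico (k * (c / k)) (c + 1), F s := by
    rw [range_eq_Ico, sum_Ico_add, zero_add, add_comm k n]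
    refine (sum_subset (fun s hs => ?_) fun s hs hs' => ?_).symm
    · simp only [mem_Ico] at hs ⊢; omega
    · simp only [mem_Ico, not_and_or, not_le, not_lt] at hs hs'
      rcases hs' with hs' | hs'
      · have : s / k < c / k := (Nat.div_lt_iff_lt_mul hk).mpr (by rwa [mul_comm])
        simp only [F]
        rw [not_imp_comm.mp div_eq_succ_of_acrossBlock_ne_zero (by omega), zero_mul]
      · simp only [F]
        rw [if_neg (by omega), withinBlock_eq_zero_of_le (by omega), mul_zero]
  have hblock : ∀ s ∈ Ico (k * (c / k)) c, F s = acrossBlock k a n s * a s c := by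
    intro s hs
    have hsc := mem_Ico.mp hs
    simp only [F]
    rw [if_neg hsc.2.ne, withinBlock,
      if_pos ⟨hsc.2, (div_eq_of_mem_Icc hk (Ico_subset_Icc_self hs)).symm⟩]
  rw [unipotentLift_single_apply, if_neg (by omega), withinBlock, if_neg (by omega), zero_add,
    hsum, sum_Ico_succ_top hbc, sum_congr rfl hblock]
  simp only [F, ↓reduceIte, mul_one]
  rw [acrossBlock_eq, if_pos ⟨hq, hr⟩, add_sub_cancel]

lemma unipotentLift_single_apply_of_le (hdiag : ∀ n, a n n = 1) {c n : ℕ} (h : n ≤ c)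
    (h' : c < n + k) : unipotentLift hk ha (lp.single 2 c 1) n = a n c := by
  by_cases hq : c / k = n / k
  · exact unipotentLift_single_apply_of_div_eq hk ha hdiag h hq
  · obtain ⟨hq', hr⟩ := div_eq_succ_of_lt_add hk h h' hq
    exact unipotentLift_single_apply_of_div_eq_succ hk ha hq' hr

end UnipotentLift

end UpperTriangularLift

lemma HilbertBasis.inner_conj_repr_apply {ι 𝕜 H : Type*} [RCLike 𝕜] [DecidableEq ι]
    [NormedAddCommGroup H] [InnerProductSpace 𝕜 H] (e : HilbertBasis ι 𝕜 H)
    (T : lp (fun _ : ι => 𝕜) 2 →L[𝕜] lp (fun _ : ι => 𝕜) 2) (m c : ι) :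
    inner 𝕜 (e m) (e.repr.toContinuousLinearEquiv.symm.conjContinuousAlgEquiv T (e c)) =
      T (lp.single 2 c 1) m := by
  rw [← e.repr_apply_apply, ContinuousLinearEquiv.conjContinuousAlgEquiv_apply_apply]
  simp [e.repr_self]

end

open UpperTriangularLift

/-- Surjectivity of `π∞_{+,k} : GL∞_+ → GL∞_{+,k}`: any prescribed bounded first `k`
diagonals `g` with invertible diagonal part `g₀` (bounded below in absolute value) can be
completed, by an element of `I∞_{+,k}`, to an invertible bounded upper triangular operator
on the Hilbert space. -/
theorem stmt11
    {H : Type*} [NormedAddCommGroup H] [InnerProductSpace ℝ H] [CompleteSpace H]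
    (e : HilbertBasis ℕ ℝ H)
    (k : ℕ) (hk : 0 < k)
    (g : Fin k → ℕ → ℝ) (hbd : ∀ i, ∃ C, ∀ n, |g i n| ≤ C)
    (ε : ℝ) (hε : 0 < ε) (hg0 : ∀ n, ε ≤ |g ⟨0, hk⟩ n|) :
    ∃ x : H →L[ℝ] H, IsUnit x ∧
      (∀ m n : ℕ, n < m → (inner ℝ (e m) (x (e n)) : ℝ) = 0) ∧
      (∀ (i : Fin k) (n : ℕ), (inner ℝ (e n) (x (e (n + i.1))) : ℝ) = g i n) := by
  obtain ⟨C, hC⟩ : ∃ C, ∀ i n, |g i n| ≤ C := by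
    choose C hC using hbd
    obtain ⟨B, hB⟩ := Finite.exists_le C
    exact ⟨B, fun i n => (hC i n).trans (hB i)⟩
  set g₀ := g ⟨0, hk⟩
  have hg₀ n : g₀ n ≠ 0 := abs_pos.mp (hε.trans_le (hg0 n))
  -- only the values with `n ≤ c < n + k` matter
  let a (n c : ℕ) : ℝ := if h : c - n < k then g ⟨c - n, h⟩ n / g₀ n else 0
  have ha : ∃ C, ∀ n c, |a n c| ≤ C := by
    have hC0 : 0 ≤ C := (abs_nonneg _).trans (hC ⟨0, hk⟩ 0)
    refine ⟨C / ε, fun n c => ?_⟩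
    simp only [a]
    split_ifs
    · rw [abs_div]
      exact div_le_div₀ hC0 (hC _ _) hε (hg0 n)
    · rw [abs_zero]
      positivity
  have hdiag n : a n n = 1 := by simp [a, hk, g₀, hg₀]
  let Δ := weightedShift g₀ 0 ⟨C, hC _⟩
  refine ⟨e.repr.toContinuousLinearEquiv.symm.conjContinuousAlgEquiv (Δ * unipotentLift hk ha),
    ((isUnit_weightedShift_zero g₀ _ hε hg0).mul (isUnit_unipotentLift hk ha)).map _,
    fun m n hnm => ?_, fun i n => ?_⟩ <;>
  rw [HilbertBasis.inner_conj_repr_apply, mul_apply_eq_comp, weightedShift_apply, add_zero]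
  · rw [unipotentLift_single_apply_of_lt hk ha hnm, mul_zero]
  · rw [unipotentLift_single_apply_of_le hk ha hdiag (Nat.le_add_right n i) (by omega)]
    simp [a, g₀, hg₀, mul_div_cancel₀]
end

section
/- The operator I − S², where S is the unilateral backward shift with S|n+1⟩ = |n⟩, S|0⟩ = 0 on ℓ², is injective but not surjective: the vector v = Σ_{n≥0} (1/(n+1)) |n⟩ ∈ ℓ² is not in the range of I − S². Hence I + I∞_{+,2} contains non-invertible operators. -/
/-!
In coordinates `a n = ⟪e n, x⟫` the operator `1 - S²` acts by `a n ↦ a n - a (n + 2)`, and the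
coordinates of every vector tend to zero (Bessel). A kernel vector therefore has 2-periodic
coordinates tending to zero, hence vanishes. A preimage `x` of `v` would satisfy
`a (2j) - a (2j + 2) = 1 / (2j + 1)`; the partial sums telescope to `a 0 - a (2k) → a 0`, so the
odd harmonic series would converge.
-/

open Filter Topology Function

theorem Orthonormal.tendsto_inner_cofinite_zero {𝕜 E ι : Type*} [RCLike 𝕜]
    [NormedAddCommGroup E] [InnerProductSpace 𝕜 E] {v : ι → E} (hv : Orthonormal 𝕜 v) (x : E) :
    Tendsto (fun i => inner 𝕜 (v i) x) cofinite (𝓝 0) := by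
  rw [tendsto_zero_iff_norm_tendsto_zero]
  simpa [Real.sqrt_sq (norm_nonneg _)] using
    (hv.inner_products_summable x).tendsto_cofinite_zero.sqrt

theorem Function.Periodic.eq_of_tendsto_atTop {α : Type*} [TopologicalSpace α] [T2Space α]
    {a : ℕ → α} {p : ℕ} (hper : Periodic a p) (hp : 0 < p) {l : α}
    (ha : Tendsto a atTop (𝓝 l)) (n : ℕ) : a n = l := by
  have hsub : Tendsto (fun k : ℕ => n + k * p) atTop atTop :=
    tendsto_atTop_mono (fun k => le_add_left (Nat.le_mul_of_pos_right k hp)) tendsto_id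
  have hconst : Tendsto (fun _ : ℕ => a n) atTop (𝓝 l) :=
    (ha.comp hsub).congr fun k => hper.nat_mul k n
  exact tendsto_nhds_unique tendsto_const_nhds hconst

theorem not_summable_one_div_two_mul_add_one :
    ¬ Summable fun j : ℕ => 1 / (2 * (j : ℝ) + 1) := by
  intro h
  refine Real.not_summable_one_div_natCast ((summable_nat_add_iff 1).mp ?_)
  refine (h.mul_left 2).of_nonneg_of_le (fun j => by positivity) fun j => ?_
  rw [mul_one_div, div_le_div_iff₀ (by positivity) (by positivity)]
  push_cast
  linarith

theorem not_tendsto_zero_of_sub_add_two_eq {a : ℕ → ℝ}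
    (ha : ∀ n, a n - a (n + 2) = 1 / ((n : ℝ) + 1)) : ¬ Tendsto a atTop (𝓝 0) := by
  intro h
  have hpartial (k : ℕ) :
      ∑ j ∈ Finset.range k, 1 / (2 * (j : ℝ) + 1) = a 0 - a (2 * k) := by
    rw [← Finset.sum_range_sub' (fun j => a (2 * j))]
    refine Finset.sum_congr rfl fun j _ => ?_
    rw [mul_add, mul_one, ha]
    push_cast
    ring
  refine not_summable_one_div_two_mul_add_one
    ((hasSum_iff_tendsto_nat_of_nonneg (fun j => by positivity) (a 0)).mpr ?_).summable
  simp_rw [hpartial]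
  simpa using tendsto_const_nhds.sub (h.comp (tendsto_id.const_mul_atTop' two_pos))

namespace HilbertBasis

variable {𝕜 E : Type*} [RCLike 𝕜] [NormedAddCommGroup E] [InnerProductSpace 𝕜 E]
  (e : HilbertBasis ℕ 𝕜 E) {S : E →L[𝕜] E}

theorem inner_apply_eq_inner_succ (hS0 : S (e 0) = 0) (hS : ∀ n, S (e (n + 1)) = e n)
    (n : ℕ) (x : E) : inner 𝕜 (e n) (S x) = inner 𝕜 (e (n + 1)) x := by
  suffices (innerSL 𝕜 (e n)).comp S = innerSL 𝕜 (e (n + 1)) from congr($this x)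
  refine ContinuousLinearMap.ext_on
    (Submodule.dense_iff_topologicalClosure_eq_top.mpr e.dense_span) ?_
  rintro _ ⟨m, rfl⟩
  cases m with
  | zero => simp [hS0, e.orthonormal.inner_eq_zero]
  | succ k => simp [hS, orthonormal_iff_ite.mp e.orthonormal]

theorem inner_one_sub_sq_apply (hS0 : S (e 0) = 0) (hS : ∀ n, S (e (n + 1)) = e n)
    (n : ℕ) (x : E) :
    inner 𝕜 (e n) (((1 : E →L[𝕜] E) - S ^ 2) x) = inner 𝕜 (e n) x - inner 𝕜 (e (n + 2)) x := by
  rw [sub_apply, pow_two, mul_apply_eq_comp, one_apply_eq_self, inner_sub_right,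
    e.inner_apply_eq_inner_succ hS0 hS, e.inner_apply_eq_inner_succ hS0 hS]

theorem injective_one_sub_sq (hS0 : S (e 0) = 0) (hS : ∀ n, S (e (n + 1)) = e n) :
    Injective ⇑((1 : E →L[𝕜] E) - S ^ 2) := by
  refine (injective_iff_map_eq_zero _).mpr fun x hx => ?_
  have hper : Periodic (fun n => inner 𝕜 (e n) x) 2 := fun n => by
    have := e.inner_one_sub_sq_apply hS0 hS n x
    rwa [hx, inner_zero_right, eq_comm, sub_eq_zero, eq_comm] at this
  have hcoord := hper.eq_of_tendsto_atTop two_pos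
    (Nat.cofinite_eq_atTop ▸ e.orthonormal.tendsto_inner_cofinite_zero x)
  rw [← e.repr.map_eq_zero_iff]
  ext n
  simpa [e.repr_apply_apply] using hcoord n

end HilbertBasis

theorem stmt12_general
    {H : Type*} [NormedAddCommGroup H] [InnerProductSpace ℝ H]
    (e : HilbertBasis ℕ ℝ H)
    (S : H →L[ℝ] H) (hS0 : S (e 0) = 0) (hS : ∀ n : ℕ, S (e (n + 1)) = e n)
    (v : H) (hv : ∀ n : ℕ, (inner ℝ (e n) v : ℝ) = 1 / ((n : ℝ) + 1)) :
    Function.Injective ⇑(1 - S ^ 2 : H →L[ℝ] H) ∧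
    ¬ Function.Surjective ⇑(1 - S ^ 2 : H →L[ℝ] H) ∧
    v ∉ Set.range ⇑(1 - S ^ 2 : H →L[ℝ] H) := by
  have hv_notMem : v ∉ Set.range ⇑(1 - S ^ 2 : H →L[ℝ] H) := by
    rintro ⟨x, rfl⟩
    refine not_tendsto_zero_of_sub_add_two_eq (a := fun n => inner ℝ (e n) x) (fun n => ?_)
      (Nat.cofinite_eq_atTop ▸ e.orthonormal.tendsto_inner_cofinite_zero x)
    rw [← hv, e.inner_one_sub_sq_apply hS0 hS]
  exact ⟨e.injective_one_sub_sq hS0 hS, fun hsurj => hv_notMem (hsurj v), hv_notMem⟩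

/-- `I - S²` (with `S` the backward shift, `S|n+1⟩ = |n⟩`, `S|0⟩ = 0`) is injective but
not surjective: the vector `v` with coordinates `v_n = 1/(n+1)` is not in its range.
Hence `I + I∞_{+,2}` contains non-invertible operators. -/
theorem stmt12
    {H : Type*} [NormedAddCommGroup H] [InnerProductSpace ℝ H] [CompleteSpace H]
    (e : HilbertBasis ℕ ℝ H)
    (S : H →L[ℝ] H) (hS0 : S (e 0) = 0) (hS : ∀ n : ℕ, S (e (n + 1)) = e n)
    (v : H) (hv : ∀ n : ℕ, (inner ℝ (e n) v : ℝ) = 1 / ((n : ℝ) + 1)) :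
    Function.Injective ⇑(1 - S ^ 2 : H →L[ℝ] H) ∧
    ¬ Function.Surjective ⇑(1 - S ^ 2 : H →L[ℝ] H) ∧
    v ∉ Set.range ⇑(1 - S ^ 2 : H →L[ℝ] H) :=
  stmt12_general e S hS0 hS v hv
end

section
/- On ℓ∞ × ℓ¹ with weak symplectic form ω((q,p),(q',p')) = ⟨q,p'⟩ − ⟨q',p⟩, a smooth function h admits a Hamiltonian vector field if and only if the partial derivative ∂h/∂q ∈ (ℓ∞)* actually lies in ℓ¹ ⊆ (ℓ∞)*; in that case X_h(q,p) = (∂h/∂p, −∂h/∂q) with ∂h/∂p ∈ ℓ∞ = (ℓ¹)*. -/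
/-! A continuous functional on `ℓ¹` is represented by the bounded sequence of its values on the
unit vectors, so `ω(X, ·)` realises every functional whose `ℓ∞`-part comes from `ℓ¹`; conversely
the `ℓ∞`-part of `ω(X, ·)` is pairing with `-X.2 ∈ ℓ¹`. -/

/-- The weak symplectic form `ω((q,p),(q',p')) = ⟨q,p'⟩ - ⟨q',p⟩` on `ℓ∞ × ℓ¹`. -/
noncomputable def wsf (a b : (lp (fun _ : ℕ => ℝ) ⊤) × (lp (fun _ : ℕ => ℝ) 1)) : ℝ :=
  (∑' k : ℕ, a.1 k * b.2 k) - (∑' k : ℕ, b.1 k * a.2 k)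

local notation "ℓ∞" => lp (fun _ : ℕ => ℝ) ⊤
local notation "ℓ¹" => lp (fun _ : ℕ => ℝ) 1

theorem wsf_inl_right (X : ℓ∞ × ℓ¹) (v : ℓ∞) : wsf X (v, 0) = ∑' k, -(X.2 k) * v k := by
  simp only [wsf, lp.coeFn_zero, Pi.zero_apply, mul_zero, tsum_zero, zero_sub, ← tsum_neg]
  exact tsum_congr fun k => by ring

theorem wsf_inr_right (X : ℓ∞ × ℓ¹) (w : ℓ¹) : wsf X (0, w) = ∑' k, X.1 k * w k := by
  simp [wsf]

theorem wsf_mk_neg (b : ℓ∞) (a : ℓ¹) (v : ℓ∞ × ℓ¹) :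
    wsf (b, -a) v = ∑' k, a k * v.1 k + ∑' k, b k * v.2 k := by
  have hneg : ∑' k, v.1 k * (-a) k = -∑' k, a k * v.1 k := by
    rw [← tsum_neg]
    exact tsum_congr fun k => by rw [lp.coeFn_neg, Pi.neg_apply]; ring
  rw [wsf, hneg]
  ring

theorem memℓp_top_apply_single (L : ℓ¹ →L[ℝ] ℝ) :
    Memℓp (fun k => L (lp.single 1 k 1)) ⊤ := by
  refine memℓp_infty ⟨‖L‖, ?_⟩
  rintro - ⟨k, rfl⟩
  calc ‖L (lp.single 1 k 1)‖ ≤ ‖L‖ * ‖(lp.single 1 k 1 : ℓ¹)‖ := L.le_opNorm _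
    _ = ‖L‖ := by rw [lp.norm_single one_pos, norm_one, mul_one]

noncomputable def ellOneDualRep (L : ℓ¹ →L[ℝ] ℝ) : ℓ∞ :=
  ⟨fun k => L (lp.single 1 k 1), memℓp_top_apply_single L⟩

theorem hasSum_ellOneDualRep_mul (L : ℓ¹ →L[ℝ] ℝ) (w : ℓ¹) :
    HasSum (fun k => ellOneDualRep L k * w k) (L w) := by
  have hw : HasSum (fun k => lp.single 1 k (w k)) w := lp.hasSum_single ENNReal.one_ne_top w
  convert hw.mapL L using 2 with k
  have hsingle : lp.single 1 k (w k) = w k • lp.single (E := fun _ : ℕ => ℝ) 1 k 1 := by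
    rw [← lp.single_smul, smul_eq_mul, mul_one]
  rw [hsingle, map_smul, smul_eq_mul, mul_comm]
  rfl

theorem exists_forall_eq_wsf_iff (L : ℓ∞ × ℓ¹ →L[ℝ] ℝ) :
    (∃ X, ∀ v, L v = wsf X v) ↔ ∃ a : ℓ¹, ∀ v : ℓ∞, L (v, 0) = ∑' k, a k * v k := by
  constructor
  · rintro ⟨X, hX⟩
    refine ⟨-X.2, fun v => ?_⟩
    rw [hX, wsf_inl_right]
    rfl
  · rintro ⟨a, ha⟩
    let b := ellOneDualRep (L.comp (ContinuousLinearMap.inr ℝ ℓ∞ ℓ¹))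
    refine ⟨(b, -a), fun v => ?_⟩
    rw [wsf_mk_neg, ← ha, (hasSum_ellOneDualRep_mul _ v.2).tsum_eq,
      ContinuousLinearMap.comp_apply, ContinuousLinearMap.inr_apply, ← map_add, Prod.fst_add_snd]

theorem stmt14_general
    (h : (lp (fun _ : ℕ => ℝ) ⊤) × (lp (fun _ : ℕ => ℝ) 1) → ℝ)
    (z : (lp (fun _ : ℕ => ℝ) ⊤) × (lp (fun _ : ℕ => ℝ) 1)) :
    ((∃ X, ∀ v, fderiv ℝ h z v = wsf X v) ↔
      ∃ a : lp (fun _ : ℕ => ℝ) 1, ∀ v : lp (fun _ : ℕ => ℝ) ⊤,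
        fderiv ℝ h z (v, 0) = ∑' k : ℕ, a k * v k) ∧
    (∀ X, (∀ v, fderiv ℝ h z v = wsf X v) →
      (∀ w : lp (fun _ : ℕ => ℝ) 1, fderiv ℝ h z (0, w) = ∑' k : ℕ, X.1 k * w k) ∧
      (∀ v : lp (fun _ : ℕ => ℝ) ⊤, fderiv ℝ h z (v, 0) = ∑' k : ℕ, -(X.2 k) * v k)) := by
  refine ⟨exists_forall_eq_wsf_iff _, fun X hX => ⟨fun w => ?_, fun v => ?_⟩⟩
  · rw [hX, wsf_inr_right]
  · rw [hX, wsf_inl_right]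

/-- A smooth function `h` on `(ℓ∞ × ℓ¹, ω)` admits a Hamiltonian vector field at a point
iff its partial derivative `∂h/∂q ∈ (ℓ∞)*` actually lies in `ℓ¹`; in that case the
Hamiltonian vector field is `X_h = (∂h/∂p, -∂h/∂q)`. -/
theorem stmt14
    (h : (lp (fun _ : ℕ => ℝ) ⊤) × (lp (fun _ : ℕ => ℝ) 1) → ℝ)
    (hdiff : Differentiable ℝ h)
    (z : (lp (fun _ : ℕ => ℝ) ⊤) × (lp (fun _ : ℕ => ℝ) 1)) :
    ((∃ X, ∀ v, fderiv ℝ h z v = wsf X v) ↔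
      ∃ a : lp (fun _ : ℕ => ℝ) 1, ∀ v : lp (fun _ : ℕ => ℝ) ⊤,
        fderiv ℝ h z (v, 0) = ∑' k : ℕ, a k * v k) ∧
    (∀ X, (∀ v, fderiv ℝ h z v = wsf X v) →
      (∀ w : lp (fun _ : ℕ => ℝ) 1, fderiv ℝ h z (0, w) = ∑' k : ℕ, X.1 k * w k) ∧
      (∀ v : lp (fun _ : ℕ => ℝ) ⊤, fderiv ℝ h z (v, 0) = ∑' k : ℕ, -(X.2 k) * v k)) :=
  stmt14_general h z
end
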